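/- Quantile function of the GLMGA distribution: for all σ > 0, a > 0, b > 0, for every p ∈ (0,1) and every v ∈ (0,1) satisfying I_{1/2,a}(v) = 1 − p, the point q = (2b)^{-σ} · ( v/(1−v) )^{-σ} satisfies ∫_0^q f_{σ,a,b}(t) dt = p. -/

import Mathlib

/-!
Substituting `τ = 2b y^{1/σ} / (1 + 2b y^{1/σ})` turns the GLMGA density into the Beta(a, 1/2)
density: `f_{σ,a,b}(y) dy = τ^{a-1} (1-τ)^{-1/2} dτ / B(a, 1/2)`. Hence the GLMGA distribution
function is `x ↦ I_{a,1/2}(τ(x))`. At the proposed quantile `q` one has `τ(q) = 1 - v`, and the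
reflection `t ↦ 1 - t` of the Beta integrand gives `I_{a,1/2}(1 - v) = 1 - I_{1/2,a}(v) = p`.
-/

open MeasureTheory Real Filter Topology

/-- The (real) beta function `B(m,n) = ∫_0^1 t^(m-1) (1-t)^(n-1) dt`. -/
noncomputable def betaFn (m n : ℝ) : ℝ :=
  ∫ t in (0:ℝ)..1, t ^ (m - 1) * (1 - t) ^ (n - 1)

/-- The regularized incomplete beta function `I_{m,n}(v)`. -/
noncomputable def regIncBeta (m n v : ℝ) : ℝ :=
  (∫ t in (0:ℝ)..v, t ^ (m - 1) * (1 - t) ^ (n - 1)) / betaFn m n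

/-- The GLMGA density `f_{σ,a,b}`. -/
noncomputable def glmga (σ a b y : ℝ) : ℝ :=
  (2 * b) ^ a / (σ * betaFn a (1 / 2)) * y ^ (-(1 / (2 * σ) + 1))
    / (y ^ (-1 / σ) + 2 * b) ^ (a + 1 / 2)

open Set

noncomputable def betaIntegrand (m n t : ℝ) : ℝ := t ^ (m - 1) * (1 - t) ^ (n - 1)

section Beta

variable {m n : ℝ}

lemma betaIntegrand_one_sub (m n t : ℝ) : betaIntegrand m n (1 - t) = betaIntegrand n m t := by
  simp only [betaIntegrand, sub_sub_cancel, mul_comm]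

lemma betaIntegrand_pos {t : ℝ} (ht : t ∈ Ioo 0 1) : 0 < betaIntegrand m n t :=
  mul_pos (rpow_pos_of_pos ht.1 _) (rpow_pos_of_pos (sub_pos.2 ht.2) _)

lemma continuousOn_betaIntegrand : ContinuousOn (betaIntegrand m n) (Ioo 0 1) := fun _ ht =>
  ((continuousAt_rpow_const _ _ (Or.inl ht.1.ne')).mul
    ((continuousAt_rpow_const _ _ (Or.inl (sub_pos.2 ht.2).ne')).comp
      (continuousAt_const.sub continuousAt_id))).continuousWithinAt

lemma intervalIntegrable_betaIntegrand_zero_half (hm : 0 < m) (n : ℝ) :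
    IntervalIntegrable (betaIntegrand m n) volume 0 (1 / 2) := by
  refine (intervalIntegral.intervalIntegrable_rpow' (by linarith)).mul_continuousOn ?_
  refine ContinuousOn.rpow_const (by fun_prop) fun t ht => Or.inl ?_
  rw [uIcc_of_le (by norm_num)] at ht
  linarith [ht.2]

lemma intervalIntegrable_betaIntegrand (hm : 0 < m) (hn : 0 < n) {x y : ℝ}
    (hx : x ∈ Icc 0 1) (hy : y ∈ Icc 0 1) :
    IntervalIntegrable (betaIntegrand m n) volume x y := by
  have h01 : IntervalIntegrable (betaIntegrand m n) volume 0 1 := by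
    refine (intervalIntegrable_betaIntegrand_zero_half hm n).trans ?_
    have h := (intervalIntegrable_betaIntegrand_zero_half hn m).comp_sub_left 1
    simp only [betaIntegrand_one_sub] at h
    norm_num at h
    exact h.symm
  rw [← uIcc_of_le zero_le_one] at hx hy
  exact h01.mono_set (uIcc_subset_uIcc hx hy)

lemma integral_betaIntegrand_comm (m n x : ℝ) :
    ∫ t in 0..x, betaIntegrand m n t = ∫ t in 1 - x..1, betaIntegrand n m t := by
  simpa [betaIntegrand_one_sub] using
    intervalIntegral.integral_comp_sub_left (a := 0) (b := x) (betaIntegrand n m) 1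

lemma betaIntegrand_mul_mul_one_sub {t : ℝ} (ht : t ∈ Ioo 0 1) :
    betaIntegrand m n t * (t * (1 - t)) = t ^ m * (1 - t) ^ n := by
  rw [betaIntegrand, rpow_sub_one ht.1.ne', rpow_sub_one (sub_pos.2 ht.2).ne']
  field_simp [ht.1.ne', (sub_pos.2 ht.2).ne']

lemma betaFn_eq_integral_betaIntegrand (m n : ℝ) :
    betaFn m n = ∫ t in 0..1, betaIntegrand m n t := rfl

lemma betaFn_comm (m n : ℝ) : betaFn m n = betaFn n m := by
  simpa [betaFn_eq_integral_betaIntegrand] using integral_betaIntegrand_comm m n 1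

lemma betaFn_pos (hm : 0 < m) (hn : 0 < n) : 0 < betaFn m n :=
  intervalIntegral.intervalIntegral_pos_of_pos_on
    (intervalIntegrable_betaIntegrand hm hn (left_mem_Icc.2 zero_le_one)
      (right_mem_Icc.2 zero_le_one))
    (fun _ ht => betaIntegrand_pos ht) one_pos

lemma regIncBeta_eq (m n v : ℝ) :
    regIncBeta m n v = (∫ t in 0..v, betaIntegrand m n t) / betaFn m n := rfl

@[simp]
lemma regIncBeta_zero (m n : ℝ) : regIncBeta m n 0 = 0 := by
  simp [regIncBeta]

lemma regIncBeta_add_regIncBeta_one_sub (hm : 0 < m) (hn : 0 < n) {v : ℝ} (hv : v ∈ Icc 0 1) :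
    regIncBeta m n v + regIncBeta n m (1 - v) = 1 := by
  rw [regIncBeta_eq, regIncBeta_eq, integral_betaIntegrand_comm n m, sub_sub_cancel,
    betaFn_comm n m, ← add_div, intervalIntegral.integral_add_adjacent_intervals
      (intervalIntegrable_betaIntegrand hm hn (left_mem_Icc.2 zero_le_one) hv)
      (intervalIntegrable_betaIntegrand hm hn hv (right_mem_Icc.2 zero_le_one)),
    ← betaFn_eq_integral_betaIntegrand, div_self (betaFn_pos hm hn).ne']

lemma continuousOn_regIncBeta (hm : 0 < m) (hn : 0 < n) :
    ContinuousOn (regIncBeta m n) (Icc 0 1) := by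
  have h := intervalIntegral.continuousOn_primitive_interval' (intervalIntegrable_betaIntegrand
    hm hn (left_mem_Icc.2 zero_le_one) (right_mem_Icc.2 zero_le_one)) left_mem_uIcc
  rw [uIcc_of_le zero_le_one] at h
  exact h.div_const _

lemma hasDerivAt_regIncBeta (hm : 0 < m) (hn : 0 < n) {v : ℝ} (hv : v ∈ Ioo 0 1) :
    HasDerivAt (regIncBeta m n) (betaIntegrand m n v / betaFn m n) v :=
  (intervalIntegral.integral_hasDerivAt_right
    (intervalIntegrable_betaIntegrand hm hn (left_mem_Icc.2 zero_le_one) (Ioo_subset_Icc_self hv))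
    (continuousOn_betaIntegrand.stronglyMeasurableAtFilter isOpen_Ioo v hv)
    (continuousOn_betaIntegrand.continuousAt (isOpen_Ioo.mem_nhds hv))).div_const _

end Beta

noncomputable def glmgaToBeta (σ b y : ℝ) : ℝ := 2 * b * y ^ σ⁻¹ / (1 + 2 * b * y ^ σ⁻¹)

section GLMGA

variable {σ a b y : ℝ}

lemma glmgaToBeta_zero (hσ : σ ≠ 0) (b : ℝ) : glmgaToBeta σ b 0 = 0 := by
  simp [glmgaToBeta, zero_rpow (inv_ne_zero hσ)]

lemma one_sub_glmgaToBeta (hb : 0 ≤ b) (hy : 0 ≤ y) :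
    1 - glmgaToBeta σ b y = (1 + 2 * b * y ^ σ⁻¹)⁻¹ := by
  have : 0 < 1 + 2 * b * y ^ σ⁻¹ := by positivity
  rw [glmgaToBeta]
  field_simp
  ring

lemma glmgaToBeta_mem_Icc (hb : 0 ≤ b) (hy : 0 ≤ y) : glmgaToBeta σ b y ∈ Icc 0 1 := by
  have hu : 0 ≤ 2 * b * y ^ σ⁻¹ := by positivity
  exact ⟨by unfold glmgaToBeta; positivity, (div_le_one (by positivity)).2 (by linarith)⟩

lemma glmgaToBeta_mem_Ioo (hb : 0 < b) (hy : 0 < y) : glmgaToBeta σ b y ∈ Ioo 0 1 := by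
  have hu : 0 < 2 * b * y ^ σ⁻¹ := by positivity
  exact ⟨by unfold glmgaToBeta; positivity, (div_lt_one (by positivity)).2 (by linarith)⟩

lemma continuousOn_glmgaToBeta (hσ : 0 < σ) (hb : 0 ≤ b) :
    ContinuousOn (glmgaToBeta σ b) (Ici 0) := by
  have hu : Continuous fun y : ℝ => 2 * b * y ^ σ⁻¹ :=
    continuous_const.mul (continuous_rpow_const (inv_nonneg.2 hσ.le))
  refine hu.continuousOn.div (continuous_const.add hu).continuousOn fun y (hy : 0 ≤ y) => ?_
  positivity

lemma hasDerivAt_glmgaToBeta (hσ : σ ≠ 0) (hb : 0 ≤ b) (hy : 0 < y) :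
    HasDerivAt (glmgaToBeta σ b)
      (glmgaToBeta σ b y * (1 - glmgaToBeta σ b y) / (σ * y)) y := by
  have hu : HasDerivAt (fun y => 2 * b * y ^ σ⁻¹) (2 * b * (σ⁻¹ * y ^ (σ⁻¹ - 1))) y :=
    (hasDerivAt_rpow_const (Or.inl hy.ne')).const_mul _
  have hD : 0 < 1 + 2 * b * y ^ σ⁻¹ := by positivity
  refine (hu.div (hu.const_add 1) hD.ne').congr_deriv ?_
  rw [one_sub_glmgaToBeta hb hy.le, glmgaToBeta, rpow_sub_one hy.ne']
  field_simp
  ring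

lemma glmgaToBeta_rpow_neg_mul (hσ : σ ≠ 0) (hb : 0 < b) {w : ℝ} (hw : 0 < w) :
    glmgaToBeta σ b ((2 * b) ^ (-σ) * w ^ (-σ)) = (1 + w)⁻¹ := by
  have h2b : 0 < 2 * b := by positivity
  rw [glmgaToBeta, mul_rpow (by positivity) (by positivity), ← rpow_mul h2b.le, ← rpow_mul hw.le,
    neg_mul, mul_inv_cancel₀ hσ, rpow_neg_one, rpow_neg_one]
  field_simp
  ring

lemma glmga_eq_betaIntegrand_glmgaToBeta_mul (hσ : σ ≠ 0) (hb : 0 < b) (hy : 0 < y) :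
    glmga σ a b y = betaIntegrand a (1 / 2) (glmgaToBeta σ b y) / betaFn a (1 / 2)
      * (glmgaToBeta σ b y * (1 - glmgaToBeta σ b y) / (σ * y)) := by
  set u := 2 * b * y ^ σ⁻¹ with hu_def
  have hu : 0 < u := by positivity
  have hτ : glmgaToBeta σ b y = u / (1 + u) := rfl
  have h1τ : 1 - glmgaToBeta σ b y = (1 + u)⁻¹ := one_sub_glmgaToBeta hb.le hy.le
  have hsum : y ^ (-1 / σ) + 2 * b = (1 + u) / y ^ σ⁻¹ := by
    rw [neg_div, one_div, rpow_neg hy.le, hu_def]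
    field_simp
  have hpow : y ^ (-(1 / (2 * σ) + 1)) = y ^ (a / σ) / y / y ^ (σ⁻¹ * (a + 1 / 2)) := by
    rw [eq_div_iff (by positivity), ← rpow_add hy, ← rpow_sub_one hy.ne']
    congr 1
    field_simp
    ring
  have hua : u ^ a = (2 * b) ^ a * y ^ (a / σ) := by
    rw [hu_def, mul_rpow (by positivity) (by positivity), ← rpow_mul hy.le, inv_mul_eq_div]
  have hsplit : (1 + u) ^ (a + 1 / 2) = (1 + u) ^ a * (1 + u) ^ (1 / 2 : ℝ) :=
    rpow_add (by positivity) _ _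
  rw [div_mul_div_comm, betaIntegrand_mul_mul_one_sub (glmgaToBeta_mem_Ioo hb hy), h1τ, hτ,
    div_rpow hu.le (by positivity), inv_rpow (by positivity), hua, glmga, hsum,
    div_rpow (by positivity) (by positivity), ← rpow_mul hy.le, hsplit, hpow]
  field_simp

lemma glmga_pos (hσ : 0 < σ) (ha : 0 < a) (hb : 0 < b) (hy : 0 < y) : 0 < glmga σ a b y := by
  have hτ := glmgaToBeta_mem_Ioo (σ := σ) hb hy
  rw [glmga_eq_betaIntegrand_glmgaToBeta_mul hσ.ne' hb hy]
  exact mul_pos (div_pos (betaIntegrand_pos hτ) (betaFn_pos ha one_half_pos))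
    (div_pos (mul_pos hτ.1 (sub_pos.2 hτ.2)) (mul_pos hσ hy))

theorem integral_glmga_eq_regIncBeta (hσ : 0 < σ) (ha : 0 < a) (hb : 0 < b) {x : ℝ}
    (hx : 0 ≤ x) : ∫ t in 0..x, glmga σ a b t = regIncBeta a (1 / 2) (glmgaToBeta σ b x) := by
  set F := fun y => regIncBeta a (1 / 2) (glmgaToBeta σ b y)
  have hcont : ContinuousOn F (Icc 0 x) :=
    (continuousOn_regIncBeta ha one_half_pos).comp
      ((continuousOn_glmgaToBeta hσ hb.le).mono Icc_subset_Ici_self)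
      fun y hy => glmgaToBeta_mem_Icc hb.le hy.1
  have hderiv : ∀ y ∈ Ioo 0 x, HasDerivAt F (glmga σ a b y) y := fun y hy => by
    rw [glmga_eq_betaIntegrand_glmgaToBeta_mul hσ.ne' hb hy.1]
    exact (hasDerivAt_regIncBeta ha one_half_pos (glmgaToBeta_mem_Ioo hb hy.1)).comp y
      (hasDerivAt_glmgaToBeta hσ.ne' hb.le hy.1)
  have hint : IntervalIntegrable (glmga σ a b) volume 0 x :=
    (intervalIntegrable_iff_integrableOn_Ioc_of_le hx).2 <|
      intervalIntegral.integrableOn_deriv_of_nonneg hcont hderiv fun y hy =>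
        (glmga_pos hσ ha hb hy.1).le
  rw [intervalIntegral.integral_eq_sub_of_hasDeriv_right_of_le hx hcont
    (fun y hy => (hderiv y hy).hasDerivWithinAt) hint]
  simp [F, glmgaToBeta_zero hσ.ne']

end GLMGA

theorem glmga_quantile_general (σ a b p v : ℝ) (hσ : 0 < σ) (ha : 0 < a) (hb : 0 < b)
    (hv : v ∈ Set.Ioo (0:ℝ) 1)
    (hIv : regIncBeta (1 / 2) a v = 1 - p) :
    ∫ t in (0:ℝ)..((2 * b) ^ (-σ) * (v / (1 - v)) ^ (-σ)), glmga σ a b t = p := by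
  obtain ⟨hv0, hv1⟩ := hv
  have hw : 0 < v / (1 - v) := div_pos hv0 (sub_pos.2 hv1)
  have hq_map : glmgaToBeta σ b ((2 * b) ^ (-σ) * (v / (1 - v)) ^ (-σ)) = 1 - v := by
    rw [glmgaToBeta_rpow_neg_mul hσ.ne' hb hw]
    field_simp [(sub_pos.2 hv1).ne']
    ring
  rw [integral_glmga_eq_regIncBeta hσ ha hb (by positivity), hq_map]
  linarith [regIncBeta_add_regIncBeta_one_sub one_half_pos ha ⟨hv0.le, hv1.le⟩]

/-- quantile function of the GLMGA distribution. -/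
theorem glmga_quantile (σ a b p v : ℝ) (hσ : 0 < σ) (ha : 0 < a) (hb : 0 < b)
    (hp : p ∈ Set.Ioo (0:ℝ) 1) (hv : v ∈ Set.Ioo (0:ℝ) 1)
    (hIv : regIncBeta (1 / 2) a v = 1 - p) :
    ∫ t in (0:ℝ)..((2 * b) ^ (-σ) * (v / (1 - v)) ^ (-σ)), glmga σ a b t = p :=
  glmga_quantile_general σ a b p v hσ ha hb hv hIv
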